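/- arXiv:1408.5833 — 4 statements merged into one kernel-verified Lean document; each statement's English description precedes it below -/
import Mathlib

section
/- Consider the scalar recursion x⁺ = x − f(x) + u on (0,a], where f satisfies: f continuous on [0,a], 0 < f(z) < z for z ∈ (0,a], f is C¹ on (0,δ̃) with 1 − L ≤ f'(z) ≤ 1 (L ∈ (0,1), δ̃ ∈ (0,a]). Let x* ∈ (0,δ̃) and u* = f(x*). Then for any x ∈ (0,δ̃] and u ∈ [0,u*]: max(0, x − f(x) + u − x*) ≤ L·max(0, x − x*). -/
open Set

/-
Put `g z = z - f z`. The derivative bounds `1 - L ≤ f' ≤ 1` say exactly that both `g` and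
`z ↦ L z - g z` are nondecreasing on `(0, δ̃]`. Since `u ≤ u* = xs - g xs`, for `x ≤ xs` the
first gives `g x + u - xs ≤ g x - g xs ≤ 0`, and for `x ≥ xs` the second gives
`g x + u - xs ≤ g x - g xs ≤ L (x - xs)`.
-/

lemma monotoneOn_Ioc_of_hasDerivAt_nonneg {a b : ℝ} {f f' : ℝ → ℝ}
    (hf : ContinuousOn f (Ioc a b)) (hf' : ∀ z ∈ Ioo a b, HasDerivAt f (f' z) z)
    (hf'₀ : ∀ z ∈ Ioo a b, 0 ≤ f' z) : MonotoneOn f (Ioc a b) := by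
  refine monotoneOn_of_hasDerivWithinAt_nonneg (f' := f') (convex_Ioc a b) hf
    (fun z hz => ?_) ?_
  · rw [interior_Ioc] at hz ⊢
    exact (hf' z hz).hasDerivWithinAt
  · simpa only [interior_Ioc] using hf'₀

lemma max_zero_sub_le_mul_max_zero_sub {D : Set ℝ} {g : ℝ → ℝ} {L xs x u : ℝ} (hL : 0 ≤ L)
    (hg : MonotoneOn g D) (hLg : MonotoneOn (fun z => L * z - g z) D)
    (hxs : xs ∈ D) (hx : x ∈ D) (hu : u ≤ xs - g xs) :
    max 0 (g x + u - xs) ≤ L * max 0 (x - xs) := by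
  have hrhs : 0 ≤ L * max 0 (x - xs) := mul_nonneg hL (le_max_left _ _)
  rcases le_total x xs with hle | hle
  · have : g x ≤ g xs := hg hx hxs hle
    exact max_le hrhs (by linarith)
  · have : L * xs - g xs ≤ L * x - g x := hLg hxs hx hle
    refine max_le hrhs ?_
    calc g x + u - xs ≤ L * (x - xs) := by linarith
      _ ≤ L * max 0 (x - xs) := mul_le_mul_of_nonneg_left (le_max_right _ _) hL

theorem stmt_7_general (a δt L : ℝ) (f f' : ℝ → ℝ)
    (hδt : δt ∈ Ioc 0 a) (hL : L ∈ Ioo (0:ℝ) 1)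
    (hcont : ContinuousOn f (Icc 0 a))
    (hderiv : ∀ z ∈ Ioo 0 δt, HasDerivAt f (f' z) z)
    (hd1 : ∀ z ∈ Ioo 0 δt, 1 - L ≤ f' z)
    (hd2 : ∀ z ∈ Ioo 0 δt, f' z ≤ 1)
    (xs us : ℝ) (hxs : xs ∈ Ioo 0 δt) (hus : us = f xs) :
    ∀ x ∈ Ioc 0 δt, ∀ u ∈ Icc 0 us,
      max 0 (x - f x + u - xs) ≤ L * max 0 (x - xs) := by
  intro x hx u hu
  have hf : ContinuousOn f (Ioc 0 δt) :=
    hcont.mono (Ioc_subset_Icc_self.trans (Icc_subset_Icc_right hδt.2))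
  have hg : MonotoneOn (fun z => z - f z) (Ioc 0 δt) :=
    monotoneOn_Ioc_of_hasDerivAt_nonneg (continuousOn_id.sub hf)
      (fun z hz => (hasDerivAt_id z).sub (hderiv z hz)) fun z hz => sub_nonneg.2 (hd2 z hz)
  have hLg : MonotoneOn (fun z => L * z - (z - f z)) (Ioc 0 δt) :=
    monotoneOn_Ioc_of_hasDerivAt_nonneg
      ((continuousOn_const.mul continuousOn_id).sub (continuousOn_id.sub hf))
      (fun z hz => ((hasDerivAt_id z).const_mul L).sub ((hasDerivAt_id z).sub (hderiv z hz)))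
      fun z hz => by linarith [hd1 z hz]
  exact max_zero_sub_le_mul_max_zero_sub hL.1.le hg hLg (Ioo_subset_Ioc_self hxs) hx
    (by linarith [hu.2])

theorem stmt_7 (a δt L : ℝ) (f f' : ℝ → ℝ)
    (ha : 0 < a) (hδt : δt ∈ Ioc 0 a) (hL : L ∈ Ioo (0:ℝ) 1)
    (hcont : ContinuousOn f (Icc 0 a))
    (hpos : ∀ z ∈ Ioc 0 a, 0 < f z ∧ f z < z)
    (hderiv : ∀ z ∈ Ioo 0 δt, HasDerivAt f (f' z) z)
    (hd1 : ∀ z ∈ Ioo 0 δt, 1 - L ≤ f' z)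
    (hd2 : ∀ z ∈ Ioo 0 δt, f' z ≤ 1)
    (xs us : ℝ) (hxs : xs ∈ Ioo 0 δt) (hus : us = f xs) :
    ∀ x ∈ Ioc 0 δt, ∀ u ∈ Icc 0 us,
      max 0 (x - f x + u - xs) ≤ L * max 0 (x - xs) :=
  stmt_7_general a δt L f f' hδt hL hcont hderiv hd1 hd2 xs us hxs hus
end

section
/- Let n ≥ 3 cells with conservation equations x₁⁺ = x₁ − s₂f₁(x₁) + w₁u₁, xᵢ⁺ = xᵢ − s_{i+1}fᵢ(xᵢ) + wᵢuᵢ + sᵢ(1−pᵢ₋₁)fᵢ₋₁(xᵢ₋₁) for i = 2,…,n, with conventions pₙ = 1 and s_{n+1} = 1, and I_j(x) = Σ_{i=1}^j xᵢ. Then Σ_{j=1}^n I_j(x⁺) = Σ_{j=1}^n I_j(x) + Σ_{i=1}^n (n+1−i) wᵢuᵢ − Σ_{i=1}^n (1 + pᵢ(n−i)) s_{i+1} fᵢ(xᵢ). -/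
/-! Summing the prefix sums `I_j` weights cell `i` by `n + 1 - i`. The outflow
`s (i + 1) * f i (x i)` of cell `i` is lost with weight `n + 1 - i`, while its fraction `1 - p i`
re-enters cell `i + 1` with weight `n - i`; the net coefficient is
`(n + 1 - i) - (n - i) * (1 - p i) = 1 + p i * (n - i)`. -/

open Set Finset

namespace Finset

variable {R : Type*} [CommRing R]

theorem sum_Icc_sum_Icc_one_eq_sum_mul (n : ℕ) (g : ℕ → R) :
    ∑ j ∈ Icc 1 n, ∑ i ∈ Icc 1 j, g i
      = ∑ i ∈ Icc 1 n, ((n : R) + 1 - i) * g i := by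
  rw [sum_comm' (t' := Icc 1 n) (s' := fun i => Icc i n)
    (fun j i => by simp only [mem_Icc]; omega)]
  refine sum_congr rfl fun i hi => ?_
  rw [sum_const, Nat.card_Icc, nsmul_eq_mul,
    Nat.cast_sub (by simp only [mem_Icc] at hi; omega)]
  push_cast
  ring

theorem sum_Icc_two_mul_pred_eq_sum_mul (n : ℕ) (h : ℕ → R) :
    ∑ i ∈ Icc 2 n, ((n : R) + 1 - i) * h (i - 1)
      = ∑ i ∈ Icc 1 n, ((n : R) - i) * h i := by
  calc ∑ i ∈ Icc 2 n, ((n : R) + 1 - i) * h (i - 1)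
      = ∑ i ∈ Ico (1 + 1) (n + 1), ((n : R) - (i - 1 : ℕ)) * h (i - 1) := by
        have hIcc : Icc 2 n = Ico (1 + 1) (n + 1) := by
          ext; simp only [mem_Icc, mem_Ico]; omega
        refine sum_congr hIcc fun i hi => ?_
        rw [Nat.cast_sub (by simp only [mem_Ico] at hi; omega)]
        push_cast
        ring
    _ = ∑ i ∈ Ico 1 n, ((n : R) - i) * h i :=
        sum_Ico_add_right_sub_eq (f := fun i => ((n : R) - i) * h i) 1 n 1
    _ = ∑ i ∈ Icc 1 n, ((n : R) - i) * h i :=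
        sum_subset Ico_subset_Icc_self fun i hi hi' => by
          obtain rfl : i = n := by simp only [mem_Icc, mem_Ico] at hi hi'; omega
          rw [sub_self, zero_mul]

end Finset

theorem stmt_9_general (n : ℕ)
    (x xplus u s w p : ℕ → ℝ) (f : ℕ → ℝ → ℝ)
    (hdyn1 : xplus 1 = x 1 - s 2 * f 1 (x 1) + w 1 * u 1)
    (hdyni : ∀ i ∈ Finset.Icc 2 n,
      xplus i = x i - s (i + 1) * f i (x i) + w i * u i
        + s i * (1 - p (i - 1)) * f (i - 1) (x (i - 1))) :
    ∑ j ∈ Finset.Icc 1 n, ∑ i ∈ Finset.Icc 1 j, xplus i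
      = (∑ j ∈ Finset.Icc 1 n, ∑ i ∈ Finset.Icc 1 j, x i)
        + (∑ i ∈ Finset.Icc 1 n, ((n : ℝ) + 1 - (i : ℝ)) * (w i * u i))
        - ∑ i ∈ Finset.Icc 1 n, (1 + p i * ((n : ℝ) - (i : ℝ))) * s (i + 1) * f i (x i) := by
  set out : ℕ → ℝ := fun i => s (i + 1) * f i (x i)
  have hinflow : ∑ i ∈ Finset.Icc 1 n, ((n : ℝ) + 1 - i) * (xplus i - (x i - out i + w i * u i))
      = ∑ i ∈ Finset.Icc 1 n, ((n : ℝ) - i) * ((1 - p i) * out i) := by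
    calc _ = ∑ i ∈ Finset.Icc 2 n, ((n : ℝ) + 1 - i) * (xplus i - (x i - out i + w i * u i)) := by
          refine (sum_subset (fun i => by simp only [Finset.mem_Icc]; omega) fun i hi hi' => ?_).symm
          obtain rfl : i = 1 := by simp only [Finset.mem_Icc] at hi hi'; omega
          rw [hdyn1]
          ring
      _ = ∑ i ∈ Finset.Icc 2 n, ((n : ℝ) + 1 - i) * ((1 - p (i - 1)) * out (i - 1)) := by
          refine sum_congr rfl fun i hi => ?_
          obtain ⟨k, rfl⟩ : ∃ k, i = k + 1 := ⟨i - 1, by simp only [Finset.mem_Icc] at hi; omega⟩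
          rw [hdyni _ hi, Nat.add_sub_cancel]
          ring
      _ = _ := sum_Icc_two_mul_pred_eq_sum_mul n fun i => (1 - p i) * out i
  have hsplit : ∑ i ∈ Finset.Icc 1 n, ((n : ℝ) + 1 - i) * xplus i
      = ∑ i ∈ Finset.Icc 1 n, ((n : ℝ) + 1 - i) * (x i - out i + w i * u i)
        + ∑ i ∈ Finset.Icc 1 n, ((n : ℝ) + 1 - i) * (xplus i - (x i - out i + w i * u i)) := by
    rw [← sum_add_distrib]
    exact sum_congr rfl fun i _ => by ring
  rw [sum_Icc_sum_Icc_one_eq_sum_mul, sum_Icc_sum_Icc_one_eq_sum_mul, hsplit, hinflow,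
    ← sum_add_distrib, ← sum_add_distrib, ← sum_sub_distrib]
  exact sum_congr rfl fun i _ => by ring

theorem stmt_9 (n : ℕ) (hn : 3 ≤ n)
    (x xplus u s w p : ℕ → ℝ) (f : ℕ → ℝ → ℝ)
    (hx : ∀ i ∈ Finset.Icc 1 n, 0 ≤ x i)
    (hu : ∀ i ∈ Finset.Icc 1 n, 0 ≤ u i)
    (hs : ∀ i ∈ Finset.Icc 2 (n + 1), s i ∈ Icc (0:ℝ) 1)
    (hw : ∀ i ∈ Finset.Icc 1 n, w i ∈ Icc (0:ℝ) 1)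
    (hp : ∀ i ∈ Finset.Icc 1 n, p i ∈ Icc (0:ℝ) 1)
    (hpn : p n = 1) (hsn : s (n + 1) = 1)
    (hdyn1 : xplus 1 = x 1 - s 2 * f 1 (x 1) + w 1 * u 1)
    (hdyni : ∀ i ∈ Finset.Icc 2 n,
      xplus i = x i - s (i + 1) * f i (x i) + w i * u i
        + s i * (1 - p (i - 1)) * f (i - 1) (x (i - 1))) :
    ∑ j ∈ Finset.Icc 1 n, ∑ i ∈ Finset.Icc 1 j, xplus i
      = (∑ j ∈ Finset.Icc 1 n, ∑ i ∈ Finset.Icc 1 j, x i)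
        + (∑ i ∈ Finset.Icc 1 n, ((n : ℝ) + 1 - (i : ℝ)) * (w i * u i))
        - ∑ i ∈ Finset.Icc 1 n, (1 + p i * ((n : ℝ) - (i : ℝ))) * s (i + 1) * f i (x i) :=
  stmt_9_general n x xplus u s w p f hdyn1 hdyni
end

section
/- Two-cell flow lower bound: let a₁, a₂ > 0, p ∈ [0,1], c ∈ (0,1], q > 0, r ∈ [0, min(q, c·a₂)), δ₁ ∈ (0,a₁], f₁ increasing on [0,δ₁] and non-increasing on [δ₁,a₁] with f₁(z) ≥ θ₁z, f₂(z) ≥ θ₂z (θ₁,θ₂ > 0) on the respective domains, and s = (1−d)·min(1, max(0, (min(q, c(a₂−x₂)) − u)/((1−p)f₁(x₁)))) + d·min(1, min(q, c(a₂−x₂))/((1−p)f₁(x₁))) with d ∈ [0,1], u ∈ [0,r]. Then there exists a constant C > 0, independent of (x₁,x₂,u,d), such that f₂(x₂) + (1+p)·s·f₁(x₁) ≥ C(2x₁ + x₂) for all x₁ ∈ (0,a₁], x₂ ∈ (0,a₂]. -/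
/-!
Write `D = (1 - p) f₁(x₁)` and `φ(x₂) = max 0 (min q (c (a₂ - x₂)) - r)`. Both clipped ratios
in `s`, multiplied by `D`, are at least `min D φ(x₂)` because `u ≤ r`, so the flow term is at
least `min ((1 - p) θ₁ x₁) φ(x₂)`. Since `r < c a₂`, the free capacity `φ` stays above a positive
floor while `x₂` is below `(c a₂ - r) / (2c)`; there the flow term controls `x₁` and `f₂` controls
`x₂`, while for larger `x₂` the term `θ₂ x₂` alone dominates `x₁ ≤ a₁` as well.
-/

open Set

lemma min_max_zero_le_min_one_max_zero_div_mul {D y z : ℝ} (hD : 0 < D) (hyz : y ≤ z) :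
    min D (max 0 y) ≤ min 1 (max 0 (z / D)) * D := by
  rw [min_mul_of_nonneg _ _ hD.le, max_mul_of_nonneg _ _ hD.le, one_mul, zero_mul,
    div_mul_cancel₀ _ hD.ne']
  gcongr

lemma min_max_zero_sub_le_convex_comb_mul {D M r u d : ℝ} (hD : 0 < D) (hM : 0 ≤ M)
    (hu : u ∈ Icc 0 r) (hd : d ∈ Icc (0 : ℝ) 1) :
    min D (max 0 (M - r)) ≤
      ((1 - d) * min 1 (max 0 ((M - u) / D)) + d * min 1 (M / D)) * D := by
  have hA := min_max_zero_le_min_one_max_zero_div_mul hD (by linarith [hu.2] : M - r ≤ M - u)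
  have hB := min_max_zero_le_min_one_max_zero_div_mul hD (by linarith [hu.1, hu.2] : M - r ≤ M)
  rw [max_eq_right (div_nonneg hM hD.le)] at hB
  have hA' := mul_le_mul_of_nonneg_left hA (sub_nonneg.mpr hd.2)
  have hB' := mul_le_mul_of_nonneg_left hB hd.1
  linarith

lemma min_sub_le_min_sub_of_lt {q c a r y : ℝ} (hc : 0 < c) (hy : y < (c * a - r) / (2 * c)) :
    min (q - r) ((c * a - r) / 2) ≤ min q (c * (a - y)) - r := by
  rw [← min_sub_sub_right]
  have : c * y < (c * a - r) / 2 := by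
    rw [lt_div_iff₀ (by positivity)] at hy
    linarith
  exact min_le_min le_rfl (by linarith)

lemma exists_pos_mul_add_le_add_min {a ε m κ θ : ℝ} {φ : ℝ → ℝ} (ha : 0 < a) (hε : 0 < ε)
    (hm : 0 < m) (hκ : 0 < κ) (hθ : 0 < θ) (hφ₀ : ∀ y, 0 ≤ φ y) (hφ : ∀ y < ε, m ≤ φ y) :
    ∃ C > 0, ∀ x ∈ Icc 0 a, ∀ y, 0 ≤ y → C * (x + y) ≤ θ * y + min (κ * x) (φ y) := by
  set C := min (θ / 2) (min (θ * ε / (2 * a)) (min κ (m / a)))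
  have hCθ : C ≤ θ / 2 := min_le_left _ _
  have hCε : C ≤ θ * ε / (2 * a) := (min_le_right _ _).trans (min_le_left _ _)
  have hCκ : C ≤ κ := (min_le_right _ _).trans ((min_le_right _ _).trans (min_le_left _ _))
  have hCm : C ≤ m / a := (min_le_right _ _).trans ((min_le_right _ _).trans (min_le_right _ _))
  refine ⟨C, by positivity, fun x hx y hy => ?_⟩
  have hCy : C * y ≤ θ / 2 * y := mul_le_mul_of_nonneg_right hCθ hy
  have hθy : 0 ≤ θ / 2 * y := by positivity
  rcases le_or_gt ε y with hεy | hyε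
  · have hCx : C * x ≤ θ * y / 2 := calc
      C * x ≤ θ * ε / (2 * a) * a := mul_le_mul hCε hx.2 hx.1 (by positivity)
      _ = θ * ε / 2 := by field_simp
      _ ≤ θ * y / 2 := by gcongr
    have := le_min (mul_nonneg hκ.le hx.1) (hφ₀ y)
    linarith
  · have hCxκ : C * x ≤ κ * x := mul_le_mul_of_nonneg_right hCκ hx.1
    have hCxm : C * x ≤ m := calc
      C * x ≤ m / a * a := mul_le_mul hCm hx.2 hx.1 (by positivity)
      _ = m := div_mul_cancel₀ _ ha.ne'
    have := le_min hCxκ (hCxm.trans (hφ y hyε))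
    linarith

theorem stmt_11_general (a₁ a₂ p c q r θ₁ θ₂ : ℝ) (f₁ f₂ : ℝ → ℝ)
    (ha₁ : 0 < a₁) (hp : p ∈ Ico (0:ℝ) 1) (hc : c ∈ Ioc (0:ℝ) 1)
    (hq : 0 < q) (hr : r ∈ Ico 0 (min q (c * a₂)))
    (hθ₁ : 0 < θ₁) (hθ₂ : 0 < θ₂)
    (hf₁ : ∀ z ∈ Icc 0 a₁, θ₁ * z ≤ f₁ z)
    (hf₂ : ∀ z ∈ Icc 0 a₂, θ₂ * z ≤ f₂ z) :
    ∃ C > 0, ∀ x₁ ∈ Ioc 0 a₁, ∀ x₂ ∈ Ioc 0 a₂, ∀ u ∈ Icc 0 r, ∀ d ∈ Icc (0:ℝ) 1,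
      f₂ x₂ + (1 + p) *
        ((1 - d) * min 1 (max 0 ((min q (c * (a₂ - x₂)) - u) / ((1 - p) * f₁ x₁)))
          + d * min 1 (min q (c * (a₂ - x₂)) / ((1 - p) * f₁ x₁))) * f₁ x₁
      ≥ C * (2 * x₁ + x₂) := by
  have hrq : r < q := hr.2.trans_le (min_le_left _ _)
  have hrc : r < c * a₂ := hr.2.trans_le (min_le_right _ _)
  have hp' : 0 < 1 - p := sub_pos.mpr hp.2
  obtain ⟨C, hC, hbound⟩ := exists_pos_mul_add_le_add_min
    (φ := fun y => max 0 (min q (c * (a₂ - y)) - r)) ha₁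
    (div_pos (sub_pos.mpr hrc) (mul_pos two_pos hc.1)) (lt_min (sub_pos.mpr hrq) (by linarith))
    (mul_pos hp' hθ₁) hθ₂ (fun _ => le_max_left _ _)
    (fun _ hy => le_max_of_le_right (min_sub_le_min_sub_of_lt hc.1 hy))
  refine ⟨C / 2, half_pos hC, fun x₁ hx₁ x₂ hx₂ u hu d hd => ?_⟩
  set s := (1 - d) * min 1 (max 0 ((min q (c * (a₂ - x₂)) - u) / ((1 - p) * f₁ x₁)))
    + d * min 1 (min q (c * (a₂ - x₂)) / ((1 - p) * f₁ x₁))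
  set φ := max 0 (min q (c * (a₂ - x₂)) - r)
  have hθf₁ : θ₁ * x₁ ≤ f₁ x₁ := hf₁ x₁ ⟨hx₁.1.le, hx₁.2⟩
  have hf₁pos : 0 < f₁ x₁ := (mul_pos hθ₁ hx₁.1).trans_le hθf₁
  have hD : 0 < (1 - p) * f₁ x₁ := mul_pos hp' hf₁pos
  have hflow : min ((1 - p) * f₁ x₁) φ ≤ s * ((1 - p) * f₁ x₁) :=
    min_max_zero_sub_le_convex_comb_mul hD
      (le_min hq.le (mul_nonneg hc.1.le (sub_nonneg.mpr hx₂.2))) hu hd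
  have hs : 0 ≤ s := nonneg_of_mul_nonneg_left (hflow.trans' (le_min hD.le (le_max_left _ _))) hD
  have hsf₁ : 0 ≤ p * (s * f₁ x₁) := mul_nonneg hp.1 (mul_nonneg hs hf₁pos.le)
  calc C / 2 * (2 * x₁ + x₂) ≤ C * (x₁ + x₂) := by nlinarith [hx₂.1]
    _ ≤ θ₂ * x₂ + min ((1 - p) * θ₁ * x₁) φ := hbound x₁ ⟨hx₁.1.le, hx₁.2⟩ x₂ hx₂.1.le
    _ ≤ f₂ x₂ + min ((1 - p) * f₁ x₁) φ := by
      rw [mul_assoc]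
      gcongr ?_ + min (_ * ?_) _
      exact hf₂ x₂ ⟨hx₂.1.le, hx₂.2⟩
    _ ≤ f₂ x₂ + s * ((1 - p) * f₁ x₁) := by gcongr
    _ ≤ f₂ x₂ + (1 + p) * s * f₁ x₁ := by linarith

theorem stmt_11 (a₁ a₂ p c q r δ₁ θ₁ θ₂ : ℝ) (f₁ f₂ : ℝ → ℝ)
    (ha₁ : 0 < a₁) (ha₂ : 0 < a₂) (hp : p ∈ Ico (0:ℝ) 1) (hc : c ∈ Ioc (0:ℝ) 1)
    (hq : 0 < q) (hr : r ∈ Ico 0 (min q (c * a₂)))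
    (hδ₁ : δ₁ ∈ Ioc 0 a₁)
    (hinc : StrictMonoOn f₁ (Icc 0 δ₁))
    (hdec : AntitoneOn f₁ (Icc δ₁ a₁))
    (hθ₁ : 0 < θ₁) (hθ₂ : 0 < θ₂)
    (hf₁ : ∀ z ∈ Icc 0 a₁, θ₁ * z ≤ f₁ z)
    (hf₂ : ∀ z ∈ Icc 0 a₂, θ₂ * z ≤ f₂ z) :
    ∃ C > 0, ∀ x₁ ∈ Ioc 0 a₁, ∀ x₂ ∈ Ioc 0 a₂, ∀ u ∈ Icc 0 r, ∀ d ∈ Icc (0:ℝ) 1,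
      f₂ x₂ + (1 + p) *
        ((1 - d) * min 1 (max 0 ((min q (c * (a₂ - x₂)) - u) / ((1 - p) * f₁ x₁)))
          + d * min 1 (min q (c * (a₂ - x₂)) / ((1 - p) * f₁ x₁))) * f₁ x₁
      ≥ C * (2 * x₁ + x₂) :=
  stmt_11_general a₁ a₂ p c q r θ₁ θ₂ f₁ f₂ ha₁ hp hc hq hr hθ₁ hθ₂ hf₁ hf₂
end

section
/- Let n ≥ 1, pᵢ ∈ [0,1] with pₙ = 1, sᵢ ∈ [0,1] for i = 2,…,n+1 with s_{n+1} = 1, aᵢ > 0, rᵢ ∈ [0, min(qᵢ, cᵢaᵢ)) for i = 2,…,n, cᵢ ∈ (0,1], qᵢ > 0, and fᵢ : [0,aᵢ] → ℝ≥0 satisfying Assumption (H) (in particular fᵢ(z) ≥ θᵢz for some θᵢ > 0). Suppose the sᵢ are given by the supply-priority formula (2.8) with uᵢ ∈ [0,rᵢ] and dᵢ ∈ [0,1]. Then there exists C > 0 such that Σ_{i=1}^n (1 + pᵢ(n−i)) s_{i+1} fᵢ(xᵢ) ≥ C Σ_{i=1}^n (n+1−i) xᵢ for all x ∈ (0,a₁]×…×(0,aₙ].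 -/
/-!
If cell `i + 1` accepts at least a fixed fraction `ε` of the demand of cell `i`, the `i`-th
term of the outflow sum dominates `ε θ xᵢ` (with `θ` a common lower slope of the `fᵢ`).
Otherwise the supply formula forces the receiving capacity `min(qᵢ₊₁, cᵢ₊₁(aᵢ₊₁ − xᵢ₊₁))` below
the midpoint between `rᵢ₊₁` and `min(qᵢ₊₁, cᵢ₊₁aᵢ₊₁)`, i.e. cell `i + 1` is so full that
`xᵢ₊₁ ≥ ε aᵢ ≥ ε xᵢ`. As `sₙ₊₁ = 1`, the last cell is always in the first case, and a downward
induction gives `ε ^ (n + 1) θ xᵢ ≤ ∑ outflow` for every `i`.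
-/

open Set Finset Filter Topology

lemma Finset.exists_pos_le_one_forall_mul_le {ι : Type*} (s : Finset ι) (b g : ι → ℝ)
    (hg : ∀ i ∈ s, 0 < g i) : ∃ ε > (0 : ℝ), ε ≤ 1 ∧ ∀ i ∈ s, ε * b i ≤ g i := by
  have h : ∀ᶠ ε in 𝓝 (0 : ℝ), ε < 1 ∧ ∀ i ∈ s, ε * b i < g i := by
    refine (eventually_lt_nhds one_pos).and (s.eventually_all.2 fun i hi => ?_)
    have : Tendsto (fun ε : ℝ => ε * b i) (𝓝 0) (𝓝 0) := by
      simpa using (tendsto_id (x := 𝓝 (0 : ℝ))).mul_const (b i)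
    exact this.eventually_lt_const (hg i hi)
  obtain ⟨ε, ⟨h1, hb⟩, hε⟩ :=
    ((h.filter_mono nhdsWithin_le_nhds).and (self_mem_nhdsWithin (s := Set.Ioi (0 : ℝ)))).exists
  exact ⟨ε, hε, h1.le, fun i hi => (hb i hi).le⟩

lemma pow_sub_mul_le_of_le_or_le {x : ℕ → ℝ} {m n : ℕ} {ε B : ℝ} (hε : 0 ≤ ε) (hε1 : ε ≤ 1)
    (hB : 0 ≤ B) (hlast : x n ≤ B)
    (hstep : ∀ i, m ≤ i → i < n → x i ≤ B ∨ ε * x i ≤ x (i + 1)) :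
    ∀ i, m ≤ i → i ≤ n → ε ^ (n - i) * x i ≤ B := by
  intro i hmi hin
  refine Nat.decreasingInduction' (P := fun k => ε ^ (n - k) * x k ≤ B) (fun k hkn hik ih => ?_)
    hin (by simpa using hlast)
  have hpow : ε ^ (n - k) = ε ^ (n - (k + 1)) * ε := by
    rw [← pow_succ]; congr 1; omega
  rcases hstep k (hmi.trans hik) hkn with hx | hx
  · rcases le_total 0 (x k) with hx0 | hx0
    · exact (mul_le_of_le_one_left hx0 (pow_le_one₀ hε hε1)).trans hx
    · exact (mul_nonpos_of_nonneg_of_nonpos (pow_nonneg hε _) hx0).trans hB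
  · rw [hpow, mul_assoc]
    exact (mul_le_mul_of_nonneg_left hx (pow_nonneg hε _)).trans ih

lemma mul_sum_mul_le_sum_mul {ι : Type*} (s : Finset ι) {w x : ι → ℝ} {K S : ℝ}
    (hw : ∀ i ∈ s, 0 ≤ w i) (hx : ∀ i ∈ s, K * x i ≤ S) :
    K * ∑ i ∈ s, w i * x i ≤ (∑ i ∈ s, w i) * S := by
  rw [mul_sum, sum_mul]
  refine sum_le_sum fun i hi => ?_
  linarith [mul_le_mul_of_nonneg_left (hx i hi) (hw i hi)]

/-- The supply ratio (2.8): `M` is the receiving capacity `min(qᵢ, cᵢ(aᵢ − xᵢ))`, `u` the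
reserved capacity `uᵢ`, `d` the priority `dᵢ` and `D` the demand `(1 − pᵢ₋₁) fᵢ₋₁(xᵢ₋₁)`. -/
noncomputable def supplyShare (d M u D : ℝ) : ℝ :=
  (1 - d) * min 1 (max 0 ((M - u) / D)) + d * min 1 (M / D)

section SupplyShare

variable {d M u D : ℝ}

lemma supplyShare_nonneg (hd : d ∈ Icc (0 : ℝ) 1) (hM : 0 ≤ M) (hD : 0 ≤ D) :
    0 ≤ supplyShare d M u D :=
  add_nonneg (mul_nonneg (sub_nonneg.2 hd.2) (le_min zero_le_one (le_max_left _ _)))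
    (mul_nonneg hd.1 (le_min zero_le_one (div_nonneg hM hD)))

lemma min_le_supplyShare (hd : d ∈ Icc (0 : ℝ) 1) (hu : 0 ≤ u) (hD : 0 ≤ D) :
    min 1 ((M - u) / D) ≤ supplyShare d M u D := by
  have h₁ : min 1 ((M - u) / D) ≤ min 1 (max 0 ((M - u) / D)) :=
    min_le_min_left 1 (le_max_right _ _)
  have h₂ : min 1 ((M - u) / D) ≤ min 1 (M / D) :=
    min_le_min_left 1 (div_le_div_of_nonneg_right (by linarith) hD)
  unfold supplyShare
  nlinarith [hd.1, hd.2]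

lemma le_add_supplyShare_mul (hd : d ∈ Icc (0 : ℝ) 1) (hu : 0 ≤ u) (hD : 0 < D)
    (hs : supplyShare d M u D < 1) : M ≤ u + supplyShare d M u D * D := by
  have h := (min_le_iff.1 (min_le_supplyShare (M := M) hd hu hD.le)).resolve_left hs.not_ge
  rw [div_le_iff₀ hD] at h
  linarith

end SupplyShare

lemma half_gap_le_of_min_le {q c a r x : ℝ} (hc : c ≤ 1) (hx : 0 ≤ x)
    (hr : r < min q (c * a)) (h : min q (c * (a - x)) ≤ (r + min q (c * a)) / 2) :
    (min q (c * a) - r) / 2 ≤ x := by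
  have hq : min q (c * a) ≤ q := min_le_left _ _
  have hca : min q (c * a) ≤ c * a := min_le_right _ _
  have hcx : c * x ≤ x := mul_le_of_le_one_left hx hc
  rcases min_choice q (c * (a - x)) with hm | hm <;> rw [hm] at h <;> linarith

lemma le_supplyShare_or_mul_le {d u D q c a r x ε b : ℝ} (hd : d ∈ Icc (0 : ℝ) 1)
    (hu : u ∈ Icc 0 r) (hD : 0 < D) (hDb : D ≤ b) (hc : c ≤ 1) (hx : 0 ≤ x)
    (hr : r < min q (c * a)) (hε : 0 ≤ ε) (hε1 : ε ≤ 1)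
    (hεb : ε * b ≤ (min q (c * a) - r) / 2) :
    ε ≤ supplyShare d (min q (c * (a - x))) u D ∨ ε * b ≤ x := by
  refine or_iff_not_imp_left.2 fun hs => hεb.trans (half_gap_le_of_min_le hc hx hr ?_)
  rw [not_le] at hs
  have hM := le_add_supplyShare_mul hd hu.1 hD (hs.trans_le hε1)
  have hsD := mul_le_mul hs.le hDb hD.le hε
  linarith [hu.2]

lemma pow_mul_le_sum_of_le_or_le {n : ℕ} {x σ φ w : ℕ → ℝ} {θ₀ ε : ℝ}
    (hw : ∀ i ∈ Finset.Icc 1 n, 1 ≤ w i) (hσ : ∀ i ∈ Finset.Icc 1 n, 0 ≤ σ i)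
    (hx : ∀ i ∈ Finset.Icc 1 n, 0 ≤ x i) (hφ : ∀ i ∈ Finset.Icc 1 n, θ₀ * x i ≤ φ i)
    (hθ₀ : 0 ≤ θ₀) (hε : 0 ≤ ε) (hε1 : ε ≤ 1) (hσn : ε ≤ σ n)
    (hstep : ∀ i, 1 ≤ i → i < n → ε ≤ σ i ∨ ε * x i ≤ x (i + 1)) :
    ∀ i ∈ Finset.Icc 1 n, ε ^ (n + 1) * θ₀ * x i ≤ ∑ i ∈ Finset.Icc 1 n, w i * σ i * φ i := by
  set S := ∑ i ∈ Finset.Icc 1 n, w i * σ i * φ i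
  have hφ0 : ∀ i ∈ Finset.Icc 1 n, 0 ≤ φ i := fun i hi =>
    (mul_nonneg hθ₀ (hx i hi)).trans (hφ i hi)
  have hT : ∀ i ∈ Finset.Icc 1 n, 0 ≤ w i * σ i * φ i := fun i hi =>
    mul_nonneg (mul_nonneg (zero_le_one.trans (hw i hi)) (hσ i hi)) (hφ0 i hi)
  have hterm : ∀ i ∈ Finset.Icc 1 n, ε ≤ σ i → ε * θ₀ * x i ≤ S := fun i hi hεσ =>
    calc ε * θ₀ * x i = ε * (θ₀ * x i) := mul_assoc _ _ _
      _ ≤ σ i * φ i := mul_le_mul hεσ (hφ i hi) (mul_nonneg hθ₀ (hx i hi)) (hσ i hi)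
      _ ≤ w i * σ i * φ i := by
        rw [mul_assoc]
        exact le_mul_of_one_le_left (mul_nonneg (hσ i hi) (hφ0 i hi)) (hw i hi)
      _ ≤ S := single_le_sum hT hi
  intro i hi
  obtain ⟨hi1, hin⟩ := mem_Icc.1 hi
  have hchain := pow_sub_mul_le_of_le_or_le (x := fun i => ε * θ₀ * x i) hε hε1 (sum_nonneg hT)
    (hterm n (mem_Icc.2 ⟨hi1.trans hin, le_rfl⟩) hσn)
    (fun k hk hkn => (hstep k hk hkn).imp (hterm k (mem_Icc.2 ⟨hk, hkn.le⟩)) fun h => by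
      rw [mul_left_comm]; exact mul_le_mul_of_nonneg_left h (by positivity))
    i hi1 hin
  calc ε ^ (n + 1) * θ₀ * x i = ε ^ n * (ε * θ₀ * x i) := by ring
    _ ≤ ε ^ (n - i) * (ε * θ₀ * x i) :=
      mul_le_mul_of_nonneg_right (pow_le_pow_of_le_one hε hε1 (Nat.sub_le _ _))
        (by have := hx i hi; positivity)
    _ ≤ S := hchain

lemma one_le_one_add_mul_sub {n : ℕ} {p : ℕ → ℝ}
    (hp : ∀ i ∈ Finset.Icc 1 (n - 1), p i ∈ Set.Ico (0 : ℝ) 1) (hpn : p n = 1) :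
    ∀ i ∈ Finset.Icc 1 n, 1 ≤ 1 + p i * ((n : ℝ) - i) := by
  intro i hi
  obtain ⟨hi1, hin⟩ := mem_Icc.1 hi
  have hp0 : 0 ≤ p i := by
    rcases hin.lt_or_eq with hin | rfl
    · exact (hp i (mem_Icc.2 ⟨hi1, by omega⟩)).1
    · rw [hpn]; exact zero_le_one
  have : (i : ℝ) ≤ n := by exact_mod_cast hin
  nlinarith

section SupplyRatios

variable {n : ℕ} {a c q r p x u d s : ℕ → ℝ} {f : ℕ → ℝ → ℝ}

lemma supply_ratio_succ_nonneg (hc : ∀ i ∈ Finset.Icc 2 n, c i ∈ Set.Ioc (0 : ℝ) 1)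
    (hq : ∀ i ∈ Finset.Icc 2 n, 0 < q i) (hp : ∀ i ∈ Finset.Icc 1 (n - 1), p i ∈ Set.Ico (0 : ℝ) 1)
    (hx : ∀ i ∈ Finset.Icc 1 n, x i ∈ Set.Ioc 0 (a i))
    (hf : ∀ i ∈ Finset.Icc 1 n, 0 < f i (x i)) (hd : ∀ i ∈ Finset.Icc 2 n, d i ∈ Set.Icc (0 : ℝ) 1)
    (hs : ∀ i ∈ Finset.Icc 2 n, s i = supplyShare (d i) (min (q i) (c i * (a i - x i))) (u i)
      ((1 - p (i - 1)) * f (i - 1) (x (i - 1))))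
    (hsn : s (n + 1) = 1) :
    ∀ i ∈ Finset.Icc 1 n, 0 ≤ s (i + 1) := by
  intro i hi
  obtain ⟨hi1, hin⟩ := mem_Icc.1 hi
  rcases hin.lt_or_eq with hin | rfl
  · have hj : i + 1 ∈ Finset.Icc 2 n := mem_Icc.2 ⟨by omega, hin⟩
    have hxa := (hx _ (mem_Icc.2 ⟨by omega, hin⟩)).2
    have hp1 := (hp i (mem_Icc.2 ⟨hi1, by omega⟩)).2
    rw [hs _ hj, Nat.add_sub_cancel]
    exact supplyShare_nonneg (hd _ hj)
      (le_min (hq _ hj).le (mul_nonneg (hc _ hj).1.le (by linarith)))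
      (mul_nonneg (by linarith) (hf i hi).le)
  · rw [hsn]; exact zero_le_one

lemma le_supply_ratio_succ_or_mul_le {ε : ℝ} (hc : ∀ i ∈ Finset.Icc 2 n, c i ∈ Set.Ioc (0 : ℝ) 1)
    (hr : ∀ i ∈ Finset.Icc 2 n, r i ∈ Set.Ico 0 (min (q i) (c i * a i)))
    (hp : ∀ i ∈ Finset.Icc 1 (n - 1), p i ∈ Set.Ico (0 : ℝ) 1)
    (hx : ∀ i ∈ Finset.Icc 1 n, x i ∈ Set.Ioc 0 (a i))
    (hf : ∀ i ∈ Finset.Icc 1 n, 0 < f i (x i) ∧ f i (x i) < x i)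
    (hu : ∀ i ∈ Finset.Icc 2 n, u i ∈ Set.Icc 0 (r i))
    (hd : ∀ i ∈ Finset.Icc 2 n, d i ∈ Set.Icc (0 : ℝ) 1)
    (hs : ∀ i ∈ Finset.Icc 2 n, s i = supplyShare (d i) (min (q i) (c i * (a i - x i))) (u i)
      ((1 - p (i - 1)) * f (i - 1) (x (i - 1))))
    (hε : 0 ≤ ε) (hε1 : ε ≤ 1)
    (hεa : ∀ j ∈ Finset.Icc 2 n, ε * a (j - 1) ≤ (min (q j) (c j * a j) - r j) / 2) :
    ∀ i, 1 ≤ i → i < n → ε ≤ s (i + 1) ∨ ε * x i ≤ x (i + 1) := by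
  intro i hi hin
  have hj : i + 1 ∈ Finset.Icc 2 n := mem_Icc.2 ⟨by omega, hin⟩
  have hi' : i ∈ Finset.Icc 1 n := mem_Icc.2 ⟨hi, hin.le⟩
  obtain ⟨hf0, hfx⟩ := hf i hi'
  obtain ⟨hp0, hp1⟩ := hp i (mem_Icc.2 ⟨hi, by omega⟩)
  have hxa := (hx i hi').2
  have hεa' : ε * a i ≤ (min (q (i + 1)) (c (i + 1) * a (i + 1)) - r (i + 1)) / 2 := by
    simpa using hεa _ hj
  rw [hs _ hj, Nat.add_sub_cancel]
  refine (le_supplyShare_or_mul_le (hd _ hj) (hu _ hj) (mul_pos (by linarith) hf0) (by nlinarith)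
    (hc _ hj).2 (hx _ (mem_Icc.2 ⟨by omega, hin⟩)).1.le (hr _ hj).2 hε hε1 hεa').imp_right
    fun h => (mul_le_mul_of_nonneg_left hxa hε).trans h

end SupplyRatios

theorem stmt_12_general (n : ℕ) (hn : 1 ≤ n)
    (a c q r p θ : ℕ → ℝ) (f : ℕ → ℝ → ℝ)
    (hc : ∀ i ∈ Finset.Icc 2 n, c i ∈ Ioc (0:ℝ) 1)
    (hq : ∀ i ∈ Finset.Icc 2 n, 0 < q i)
    (hr : ∀ i ∈ Finset.Icc 2 n, r i ∈ Ico 0 (min (q i) (c i * a i)))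
    (hp : ∀ i ∈ Finset.Icc 1 (n - 1), p i ∈ Ico (0:ℝ) 1)
    (hpn : p n = 1)
    -- Assumption (H) for each cell
    (hposf : ∀ i ∈ Finset.Icc 1 n, ∀ z ∈ Ioc 0 (a i), 0 < f i z ∧ f i z < z)
    (hθ : ∀ i ∈ Finset.Icc 1 n, 0 < θ i)
    (hθf : ∀ i ∈ Finset.Icc 1 n, ∀ z ∈ Icc 0 (a i), θ i * z ≤ f i z) :
    ∃ C > 0, ∀ x u d s : ℕ → ℝ,
      (∀ i ∈ Finset.Icc 1 n, x i ∈ Ioc 0 (a i)) →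
      (∀ i ∈ Finset.Icc 2 n, u i ∈ Icc 0 (r i)) →
      (∀ i ∈ Finset.Icc 2 n, d i ∈ Icc (0:ℝ) 1) →
      (∀ i ∈ Finset.Icc 2 n, s i =
        (1 - d i) * min 1 (max 0 ((min (q i) (c i * (a i - x i)) - u i)
            / ((1 - p (i - 1)) * f (i - 1) (x (i - 1)))))
          + d i * min 1 (min (q i) (c i * (a i - x i))
            / ((1 - p (i - 1)) * f (i - 1) (x (i - 1))))) →
      s (n + 1) = 1 →
      (∑ i ∈ Finset.Icc 1 n, (1 + p i * ((n : ℝ) - (i : ℝ))) * s (i + 1) * f i (x i))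
        ≥ C * ∑ i ∈ Finset.Icc 1 n, ((n : ℝ) + 1 - (i : ℝ)) * x i := by
  obtain ⟨θ₀, hθ₀, -, hθ₀θ⟩ := (Finset.Icc 1 n).exists_pos_le_one_forall_mul_le 1 θ hθ
  obtain ⟨ε, hε, hε1, hεa⟩ := (Finset.Icc 2 n).exists_pos_le_one_forall_mul_le (fun j => a (j - 1))
    (fun j => (min (q j) (c j * a j) - r j) / 2) fun j hj => by linarith [(hr j hj).2]
  have hw : ∀ i ∈ Finset.Icc 1 n, 0 < (n : ℝ) + 1 - i := fun i hi => by
    have : (i : ℝ) ≤ n := by exact_mod_cast (mem_Icc.1 hi).2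
    linarith
  have hW := sum_pos hw ⟨1, mem_Icc.2 ⟨le_rfl, hn⟩⟩
  refine ⟨ε ^ (n + 1) * θ₀ / ∑ i ∈ Finset.Icc 1 n, ((n : ℝ) + 1 - i), by positivity,
    fun x u d s hx hu hd hs hsn => ?_⟩
  have hx0 : ∀ i ∈ Finset.Icc 1 n, 0 ≤ x i := fun i hi => (hx i hi).1.le
  have hθx : ∀ i ∈ Finset.Icc 1 n, θ₀ * x i ≤ f i (x i) := fun i hi =>
    calc θ₀ * x i ≤ θ i * x i := by simpa using mul_le_mul_of_nonneg_right (hθ₀θ i hi) (hx0 i hi)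
      _ ≤ f i (x i) := hθf i hi _ (Ioc_subset_Icc_self (hx i hi))
  have hf : ∀ i ∈ Finset.Icc 1 n, 0 < f i (x i) ∧ f i (x i) < x i := fun i hi =>
    hposf i hi _ (hx i hi)
  have hK := pow_mul_le_sum_of_le_or_le (w := fun i => 1 + p i * ((n : ℝ) - i))
    (σ := fun i => s (i + 1)) (one_le_one_add_mul_sub hp hpn)
    (supply_ratio_succ_nonneg hc hq hp hx (fun i hi => (hf i hi).1) hd hs hsn) hx0 hθx hθ₀.le
    hε.le hε1 (hsn ▸ hε1) (le_supply_ratio_succ_or_mul_le hc hr hp hx hf hu hd hs hε.le hε1 hεa)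
  rw [ge_iff_le, div_mul_eq_mul_div, div_le_iff₀ hW]
  linarith [mul_sum_mul_le_sum_mul _ (fun i hi => (hw i hi).le) hK]

theorem stmt_12 (n : ℕ) (hn : 1 ≤ n)
    (a c q r p δ θ : ℕ → ℝ) (f : ℕ → ℝ → ℝ)
    (ha : ∀ i ∈ Finset.Icc 1 n, 0 < a i)
    (hc : ∀ i ∈ Finset.Icc 2 n, c i ∈ Ioc (0:ℝ) 1)
    (hq : ∀ i ∈ Finset.Icc 2 n, 0 < q i)
    (hr : ∀ i ∈ Finset.Icc 2 n, r i ∈ Ico 0 (min (q i) (c i * a i)))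
    (hp : ∀ i ∈ Finset.Icc 1 (n - 1), p i ∈ Ico (0:ℝ) 1)
    (hpn : p n = 1)
    -- Assumption (H) for each cell
    (hδ : ∀ i ∈ Finset.Icc 1 n, δ i ∈ Ioc 0 (a i))
    (hcont : ∀ i ∈ Finset.Icc 1 n, ContinuousOn (f i) (Icc 0 (a i)))
    (hposf : ∀ i ∈ Finset.Icc 1 n, ∀ z ∈ Ioc 0 (a i), 0 < f i z ∧ f i z < z)
    (hinc : ∀ i ∈ Finset.Icc 1 n, StrictMonoOn (f i) (Icc 0 (δ i)))
    (hdec : ∀ i ∈ Finset.Icc 1 n, AntitoneOn (f i) (Icc (δ i) (a i)))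
    (hθ : ∀ i ∈ Finset.Icc 1 n, 0 < θ i)
    (hθf : ∀ i ∈ Finset.Icc 1 n, ∀ z ∈ Icc 0 (a i), θ i * z ≤ f i z) :
    ∃ C > 0, ∀ x u d s : ℕ → ℝ,
      (∀ i ∈ Finset.Icc 1 n, x i ∈ Ioc 0 (a i)) →
      (∀ i ∈ Finset.Icc 2 n, u i ∈ Icc 0 (r i)) →
      (∀ i ∈ Finset.Icc 2 n, d i ∈ Icc (0:ℝ) 1) →
      (∀ i ∈ Finset.Icc 2 n, s i =
        (1 - d i) * min 1 (max 0 ((min (q i) (c i * (a i - x i)) - u i)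
            / ((1 - p (i - 1)) * f (i - 1) (x (i - 1)))))
          + d i * min 1 (min (q i) (c i * (a i - x i))
            / ((1 - p (i - 1)) * f (i - 1) (x (i - 1))))) →
      s (n + 1) = 1 →
      (∑ i ∈ Finset.Icc 1 n, (1 + p i * ((n : ℝ) - (i : ℝ))) * s (i + 1) * f i (x i))
        ≥ C * ∑ i ∈ Finset.Icc 1 n, ((n : ℝ) + 1 - (i : ℝ)) * x i :=
  stmt_12_general n hn a c q r p θ f hc hq hr hp hpn hposf hθ hθf
end
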